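/- Let P : ℝ → ℝ be bounded, differentiable, and integrable with ‖P′‖_∞ < ∞, ‖P‖_∞ > 0, and let r > (8³/π) · ‖P′‖_∞ / ‖P‖_∞. Define f = P ⋆ h_r, i.e. f(x) = (1/√(2π)) ∫_ℝ P(x - t) h_r(t) dt, where h_r(t) = r·h(rt) and h is the Fejér kernel h(x) = (1/√(2π)) (sin(x/2)/(x/2))². Then |f(x) - P(x)| < ‖P‖_∞ / 4 for every real number x. -/

import Mathlib

/-!
Since `h_r ≥ 0` has mass `√(2π)`, `f(x) - P(x)` is an `h_r`-average of `P(x - t) - P(x)`. For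
`|t| ≤ δ` this difference is at most `‖P′‖_∞ δ` by the mean value theorem; for `|t| > δ` it is at
most `2‖P‖_∞`, and the bound `h(x) ≤ 4 / (√(2π) x²)` caps the mass of `h_r` there by
`8 / (√(2π) r δ)`. With `δ = 64 / (π r)` the far bound is exactly `‖P‖_∞ / 8`, and the hypothesis
on `r` makes the near bound smaller than `‖P‖_∞ / 8`.

The mass of `h` comes from Fourier inversion: with Mathlib's normalization the tent
`max (1 - |v|) 0` has transform `(sin (π w) / (π w))²`, so evaluating the inverse transform at `0`
gives `∫ (sin u / u)² = π`.
-/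

open MeasureTheory Real

/-- The Fejér kernel `h(x) = (1/√(2π)) (sin(x/2)/(x/2))²`. -/
noncomputable def fejer (x : ℝ) : ℝ :=
  (1 / Real.sqrt (2 * Real.pi)) * (Real.sin (x / 2) / (x / 2)) ^ 2

/-- Supremum norm on ℝ. -/
noncomputable def supNorm (f : ℝ → ℝ) : ℝ := ⨆ x, |f x|

open FourierTransform Set

noncomputable def tent (v : ℝ) : ℝ := max (1 - |v|) 0

lemma continuous_tent : Continuous tent := by
  unfold tent; fun_prop

lemma tent_neg (v : ℝ) : tent (-v) = tent v := by
  simp [tent]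

lemma integrable_tent : Integrable tent := by
  refine continuous_tent.integrable_of_hasCompactSupport <|
    HasCompactSupport.intro (isCompact_Icc (a := -1) (b := 1)) fun v hv => ?_
  rw [mem_Icc, ← abs_le, not_le] at hv
  exact max_eq_right (by linarith)

theorem fourier_ofReal_eq_integral_mul_cos {f : ℝ → ℝ} (hf : Integrable f)
    (heven : ∀ v, f (-v) = f v) (w : ℝ) :
    𝓕 (fun v => (f v : ℂ)) w = ((∫ v, f v * cos (2 * π * w * v) : ℝ) : ℂ) := by
  have hsin : ∫ v, f v * sin (2 * π * w * v) = 0 := by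
    have h := integral_neg_eq_self (fun v => f v * sin (2 * π * w * v)) volume
    simp only [heven, mul_neg, Real.sin_neg, integral_neg] at h
    linarith
  have hint : ∀ g : ℝ → ℝ, Continuous g → (∀ y, |g y| ≤ 1) →
      Integrable fun v => f v * g (2 * π * w * v) := fun g hg hg1 =>
    hf.mul_bdd (hg.comp (continuous_const.mul continuous_id)).aestronglyMeasurable
      (ae_of_all _ fun v => hg1 _)
  rw [Real.fourier_real_eq_integral_exp_smul]
  calc ∫ v, Complex.exp (↑(-2 * π * v * w) * Complex.I) • (f v : ℂ)
      = ∫ v, (((f v * cos (2 * π * w * v) : ℝ) : ℂ) -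
          ((f v * sin (2 * π * w * v) : ℝ) : ℂ) * Complex.I) := by
        refine integral_congr_ae (ae_of_all _ fun v => ?_)
        dsimp only
        rw [show -2 * π * v * w = -(2 * π * w * v) by ring, smul_eq_mul, Complex.exp_mul_I]
        push_cast
        rw [Complex.cos_neg, Complex.sin_neg]
        ring
    _ = _ := by
        rw [integral_sub (hint cos continuous_cos abs_cos_le_one).ofReal
          ((hint sin continuous_sin abs_sin_le_one).ofReal.mul_const _), integral_mul_const,
          integral_complex_ofReal, integral_complex_ofReal, hsin]
        simp

lemma integral_one_sub_mul_cos {a : ℝ} (ha : a ≠ 0) :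
    ∫ v in (0 : ℝ)..1, (1 - v) * cos (a * v) = (1 - cos a) / a ^ 2 := by
  have hderiv : ∀ v ∈ uIcc (0 : ℝ) 1,
      HasDerivAt (fun v => (1 - v) * sin (a * v) / a - cos (a * v) / a ^ 2)
        ((1 - v) * cos (a * v)) v := by
    intro v _
    have hs := ((hasDerivAt_id' v).const_mul a).sin
    have hc := ((hasDerivAt_id' v).const_mul a).cos
    refine (((((hasDerivAt_id' v).const_sub 1).mul hs).div_const a).sub
      (hc.div_const (a ^ 2))).congr_deriv ?_
    field_simp
    ring
  have hcont : Continuous fun v => (1 - v) * cos (a * v) := by fun_prop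
  rw [intervalIntegral.integral_eq_sub_of_hasDerivAt hderiv (hcont.intervalIntegrable 0 1)]
  simp only [sub_self, mul_one, zero_mul, zero_div, zero_sub, sub_zero, mul_zero, sin_zero,
    cos_zero, one_div, sub_neg_eq_add]
  field_simp
  ring

lemma integral_tent_mul_cos {a : ℝ} (ha : a ≠ 0) :
    ∫ v, tent v * cos (a * v) = 2 * (1 - cos a) / a ^ 2 := by
  have habs : ∀ v, tent v * cos (a * v) = tent |v| * cos (a * |v|) := by
    intro v
    rcases abs_choice v with h | h <;> rw [h]
    rw [tent_neg, mul_neg, cos_neg]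
  have hsupp : ∀ v ∈ Ioi (0 : ℝ) \ Ioc 0 1, tent v * cos (a * v) = 0 := by
    rintro v ⟨hv0, hv1⟩
    simp only [mem_Ioi, mem_Ioc, not_and, not_le] at hv0 hv1
    simp [tent, abs_of_pos hv0, (hv1 hv0).le]
  have hIoc :
      EqOn (fun v => tent v * cos (a * v)) (fun v => (1 - v) * cos (a * v)) (Ioc 0 1) := by
    rintro v ⟨hv0, hv1⟩
    simp [tent, abs_of_pos hv0, hv1]
  rw [integral_congr_ae (ae_of_all _ habs),
    integral_comp_abs (f := fun v => tent v * cos (a * v)),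
    setIntegral_eq_of_subset_of_forall_sdiff_eq_zero measurableSet_Ioi Ioc_subset_Ioi_self hsupp,
    setIntegral_congr_fun measurableSet_Ioc hIoc, ← intervalIntegral.integral_of_le zero_le_one,
    integral_one_sub_mul_cos ha]
  ring

lemma fourier_tent {w : ℝ} (hw : w ≠ 0) :
    𝓕 (fun v => (tent v : ℂ)) w = ((sin (π * w) / (π * w)) ^ 2 : ℝ) := by
  have hπw : π * w ≠ 0 := mul_ne_zero pi_ne_zero hw
  rw [fourier_ofReal_eq_integral_mul_cos integrable_tent tent_neg,
    integral_tent_mul_cos (by simpa [mul_assoc]), show 2 * π * w = 2 * (π * w) by ring,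
    cos_two_mul, cos_sq']
  congr 1
  field_simp
  ring

lemma sin_div_sq_le (u : ℝ) : (sin u / u) ^ 2 ≤ 2 * (1 + u ^ 2)⁻¹ := by
  rcases eq_or_ne u 0 with rfl | hu
  · norm_num
  rw [div_pow, ← div_eq_mul_inv, div_le_div_iff₀ (by positivity) (by positivity)]
  nlinarith [sin_sq_le_one u, sin_sq_le_sq (x := u), sq_nonneg u]

lemma integrable_sin_div_sq : Integrable fun u : ℝ => (sin u / u) ^ 2 :=
  (integrable_inv_one_add_sq.const_mul 2).mono'
    ((measurable_sin.div measurable_id).pow_const 2).aestronglyMeasurable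
    (ae_of_all _ fun u => by rw [norm_of_nonneg (sq_nonneg _)]; exact sin_div_sq_le u)

lemma integral_sin_div_sq : ∫ u, (sin u / u) ^ 2 = π := by
  have hF : 𝓕 (fun v => (tent v : ℂ)) =ᵐ[volume]
      fun w => (((sin (π * w) / (π * w)) ^ 2 : ℝ) : ℂ) := by
    filter_upwards [Measure.ae_ne volume 0] with w hw using fourier_tent hw
  have hF_int : Integrable (𝓕 fun v => (tent v : ℂ)) :=
    (integrable_sin_div_sq.comp_mul_left' pi_ne_zero).ofReal.congr hF.symm
  have hinv : 𝓕⁻ (𝓕 fun v => (tent v : ℂ)) 0 = tent 0 :=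
    integrable_tent.ofReal.fourierInv_fourier_eq hF_int
      (Complex.continuous_ofReal.comp continuous_tent).continuousAt
  have h1 : ∫ w, (sin (π * w) / (π * w)) ^ 2 = 1 := by
    rw [Real.fourierInv_eq'] at hinv
    simp only [inner_zero_right, mul_zero, Complex.ofReal_zero, zero_mul, Complex.exp_zero,
      one_smul] at hinv
    rw [integral_congr_ae hF, integral_complex_ofReal] at hinv
    simpa [tent] using hinv
  have h2 := Measure.integral_comp_mul_left (fun u => (sin u / u) ^ 2) π
  rw [h1, abs_of_pos (inv_pos.2 pi_pos), smul_eq_mul, eq_inv_mul_iff_mul_eq₀ pi_ne_zero,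
    mul_one] at h2
  exact h2.symm

lemma fejer_nonneg (x : ℝ) : 0 ≤ fejer x := by
  unfold fejer; positivity

lemma integrable_fejer : Integrable fejer :=
  (integrable_sin_div_sq.comp_div two_ne_zero).const_mul _

lemma integral_fejer : ∫ x, fejer x = sqrt (2 * π) := by
  have h2π : sqrt (2 * π) ^ 2 = 2 * π := sq_sqrt (by positivity)
  have hsub := Measure.integral_comp_div (fun u => (sin u / u) ^ 2) 2
  unfold fejer
  rw [integral_const_mul, hsub, integral_sin_div_sq, abs_two, smul_eq_mul]
  field_simp
  linarith

-- At `x = 0` both sides are `0`, by the junk values of `/` and `⁻¹`.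
lemma fejer_le (x : ℝ) : fejer x ≤ 4 / sqrt (2 * π) * x⁻¹ ^ 2 := by
  have hsin : (sin (x / 2) / (x / 2)) ^ 2 ≤ 4 * x⁻¹ ^ 2 := by
    rw [div_pow, div_eq_mul_inv (sin _ ^ 2)]
    calc sin (x / 2) ^ 2 * ((x / 2) ^ 2)⁻¹ ≤ 1 * ((x / 2) ^ 2)⁻¹ := by
          gcongr; exact sin_sq_le_one _
      _ = 4 * x⁻¹ ^ 2 := by ring
  unfold fejer
  calc 1 / sqrt (2 * π) * (sin (x / 2) / (x / 2)) ^ 2 ≤ 1 / sqrt (2 * π) * (4 * x⁻¹ ^ 2) := by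
        gcongr
    _ = 4 / sqrt (2 * π) * x⁻¹ ^ 2 := by ring

lemma integral_inv_sq_of_lt_abs {δ : ℝ} (hδ : 0 < δ) :
    ∫ t in {t : ℝ | δ < |t|}, t⁻¹ ^ 2 = 2 / δ := by
  have hIoi : ∫ t in Ioi δ, t⁻¹ ^ 2 = δ⁻¹ := by
    rw [setIntegral_congr_fun measurableSet_Ioi fun t (ht : δ < t) => by
        rw [← rpow_natCast, inv_rpow (hδ.trans ht).le, ← rpow_neg (hδ.trans ht).le],
      integral_Ioi_rpow_of_lt (by norm_num) hδ]
    norm_num [rpow_neg_one]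
  have hsub : Ioi δ ⊆ Ioi 0 := Ioi_subset_Ioi hδ.le
  calc ∫ t in {t : ℝ | δ < |t|}, t⁻¹ ^ 2
      = ∫ t, (Ioi δ).indicator (fun u => u⁻¹ ^ 2) |t| := by
        rw [← integral_indicator (measurableSet_lt measurable_const measurable_abs)]
        congr 1 with t
        by_cases ht : δ < |t| <;> simp [indicator, ht]
    _ = 2 * ∫ t in Ioi δ, t⁻¹ ^ 2 := by
        rw [integral_comp_abs, setIntegral_indicator measurableSet_Ioi,
          inter_eq_right.2 hsub]
    _ = 2 / δ := by rw [hIoi, div_eq_mul_inv]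

theorem abs_integral_comp_sub_mul_sub_le {Q k : ℝ → ℝ} {x M L δ : ℝ} (hQ : Continuous Q)
    (hQM : ∀ y, |Q y| ≤ M) (hQL : ∀ t, |Q (x - t) - Q x| ≤ L * |t|) (hk : ∀ t, 0 ≤ k t)
    (hki : Integrable k) (hδ : 0 ≤ δ) :
    |(∫ t, Q (x - t) * k t) - Q x * ∫ t, k t| ≤
      L * δ * (∫ t, k t) + 2 * M * ∫ t in {t | δ < |t|}, k t := by
  set far := {t : ℝ | δ < |t|}
  have hfar : MeasurableSet far := measurableSet_lt measurable_const measurable_abs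
  have hL : 0 ≤ L := by simpa using (abs_nonneg _).trans (hQL 1)
  have hbound : ∀ t, |Q (x - t) - Q x| * k t ≤ L * δ * k t + 2 * M * far.indicator k t := by
    intro t
    have h2M : |Q (x - t) - Q x| ≤ 2 * M := by
      have := abs_sub (Q (x - t)) (Q x); linarith [hQM (x - t), hQM x]
    by_cases ht : t ∈ far
    · rw [indicator_of_mem ht]
      nlinarith [mul_le_mul_of_nonneg_right h2M (hk t), mul_nonneg (mul_nonneg hL hδ) (hk t)]
    · rw [indicator_of_notMem ht, mul_zero, add_zero]
      exact mul_le_mul_of_nonneg_right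
        ((hQL t).trans (mul_le_mul_of_nonneg_left (not_lt.1 ht) hL)) (hk t)
  have hQk : Integrable fun t => Q (x - t) * k t :=
    hki.bdd_mul (by fun_prop) (ae_of_all _ fun t => hQM (x - t))
  calc |(∫ t, Q (x - t) * k t) - Q x * ∫ t, k t|
      = |∫ t, (Q (x - t) - Q x) * k t| := by
        simp only [sub_mul]
        rw [integral_sub hQk (hki.const_mul _), integral_const_mul]
    _ ≤ ∫ t, |Q (x - t) - Q x| * k t := by
        simpa only [abs_mul, abs_of_nonneg (hk _)] using
          abs_integral_le_integral_abs (f := fun t => (Q (x - t) - Q x) * k t)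
    _ ≤ ∫ t, (L * δ * k t + 2 * M * far.indicator k t) :=
        integral_mono_of_nonneg (ae_of_all _ fun t => mul_nonneg (abs_nonneg _) (hk t))
          ((hki.const_mul _).add ((hki.indicator hfar).const_mul _)) (ae_of_all _ hbound)
    _ = L * δ * (∫ t, k t) + 2 * M * ∫ t in far, k t := by
        rw [integral_add (hki.const_mul _) ((hki.indicator hfar).const_mul _), integral_const_mul,
          integral_const_mul, integral_indicator hfar]

section ScaledFejer

variable {r : ℝ}

lemma integrable_scaled_fejer (hr : 0 < r) : Integrable fun t => r * fejer (r * t) :=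
  (integrable_fejer.comp_mul_left' hr.ne').const_mul r

lemma integral_scaled_fejer (hr : 0 < r) : ∫ t, r * fejer (r * t) = sqrt (2 * π) := by
  rw [integral_const_mul, Measure.integral_comp_mul_left fejer r, integral_fejer, smul_eq_mul,
    abs_of_pos (inv_pos.2 hr), ← mul_assoc, mul_inv_cancel₀ hr.ne', one_mul]

lemma setIntegral_scaled_fejer_le (hr : 0 < r) {δ : ℝ} (hδ : 0 < δ) :
    ∫ t in {t : ℝ | δ < |t|}, r * fejer (r * t) ≤ 8 / (sqrt (2 * π) * r * δ) := by
  have hfar : MeasurableSet {t : ℝ | δ < |t|} := measurableSet_lt measurable_const measurable_abs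
  have hint : IntegrableOn (fun t : ℝ => t⁻¹ ^ 2) {t | δ < |t|} :=
    Integrable.of_integral_ne_zero (by rw [integral_inv_sq_of_lt_abs hδ]; positivity)
  calc ∫ t in {t : ℝ | δ < |t|}, r * fejer (r * t)
      ≤ ∫ t in {t : ℝ | δ < |t|}, 4 / (sqrt (2 * π) * r) * t⁻¹ ^ 2 :=
        setIntegral_mono_on (integrable_scaled_fejer hr).integrableOn (hint.const_mul _) hfar
          fun t _ => by
            calc r * fejer (r * t) ≤ r * (4 / sqrt (2 * π) * (r * t)⁻¹ ^ 2) := by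
                  gcongr; exact fejer_le _
              _ = 4 / (sqrt (2 * π) * r) * t⁻¹ ^ 2 := by field_simp
    _ = 8 / (sqrt (2 * π) * r * δ) := by
        rw [integral_const_mul, integral_inv_sq_of_lt_abs hδ]
        field_simp
        ring

theorem abs_fejer_conv_sub_le {Q : ℝ → ℝ} {x M L δ : ℝ} (hQ : Continuous Q)
    (hQM : ∀ y, |Q y| ≤ M) (hQL : ∀ t, |Q (x - t) - Q x| ≤ L * |t|) (hr : 0 < r)
    (hδ : 0 < δ) :
    |1 / sqrt (2 * π) * (∫ t, Q (x - t) * (r * fejer (r * t))) - Q x| ≤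
      L * δ + 8 * M / (π * r * δ) := by
  have hS : 0 < sqrt (2 * π) := by positivity
  have hSS : sqrt (2 * π) ^ 2 = 2 * π := sq_sqrt (by positivity)
  have hM : 0 ≤ M := (abs_nonneg _).trans (hQM 0)
  have h := abs_integral_comp_sub_mul_sub_le hQ hQM hQL
    (fun t => mul_nonneg hr.le (fejer_nonneg _)) (integrable_scaled_fejer hr) hδ.le
  rw [integral_scaled_fejer hr] at h
  have htail := mul_le_mul_of_nonneg_left (setIntegral_scaled_fejer_le hr hδ)
    (by positivity : 0 ≤ 2 * M)
  calc |1 / sqrt (2 * π) * (∫ t, Q (x - t) * (r * fejer (r * t))) - Q x|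
      = |(∫ t, Q (x - t) * (r * fejer (r * t))) - Q x * sqrt (2 * π)| / sqrt (2 * π) := by
        rw [← abs_of_pos hS, ← abs_div, abs_of_pos hS, sub_div, mul_div_cancel_right₀ _ hS.ne',
          one_div_mul_eq_div]
    _ ≤ (L * δ * sqrt (2 * π) + 2 * M * (8 / (sqrt (2 * π) * r * δ))) / sqrt (2 * π) := by
        gcongr
        linarith
    _ = L * δ + 8 * M / (π * r * δ) := by
        field_simp
        rw [hSS]
        ring

end ScaledFejer

lemma supNorm_nonneg (f : ℝ → ℝ) : 0 ≤ supNorm f :=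
  Real.iSup_nonneg fun x => abs_nonneg (f x)

lemma abs_le_supNorm {f : ℝ → ℝ} (hf : BddAbove (range fun x => |f x|)) (x : ℝ) :
    |f x| ≤ supNorm f :=
  le_ciSup hf x

theorem convolution_with_fejer_close_general
    (P : ℝ → ℝ) (hbdd : ∃ M : ℝ, ∀ x, |P x| ≤ M)
    (hdiff : Differentiable ℝ P)
    (hd : BddAbove (Set.range fun x => |deriv P x|))
    (hpos : 0 < supNorm P)
    (r : ℝ) (hr : r > 8 ^ 3 / Real.pi * (supNorm (deriv P) / supNorm P)) :
    ∀ x : ℝ,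
      |(1 / Real.sqrt (2 * Real.pi)) * (∫ t : ℝ, P (x - t) * (r * fejer (r * t))) - P x| <
        supNorm P / 4 := by
  intro x
  obtain ⟨M, hM⟩ := hbdd
  have hPM : ∀ y, |P y| ≤ supNorm P :=
    abs_le_supNorm ⟨M, by rintro _ ⟨y, rfl⟩; exact hM y⟩
  have hPL : ∀ t, |P (x - t) - P x| ≤ supNorm (deriv P) * |t| := fun t => by
    simpa [Real.norm_eq_abs] using Convex.norm_image_sub_le_of_norm_deriv_le (fun y _ => hdiff y)
      (fun y _ => abs_le_supNorm hd y) convex_univ (mem_univ x) (mem_univ (x - t))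
  have hr0 : 0 < r := lt_of_le_of_lt (by have := supNorm_nonneg (deriv P); positivity) hr
  have hr' : 512 * supNorm (deriv P) < r * (π * supNorm P) := by
    rw [← div_lt_iff₀ (by positivity)]
    have : 8 ^ 3 / π * (supNorm (deriv P) / supNorm P) =
        512 * supNorm (deriv P) / (π * supNorm P) := by ring
    linarith
  have hnear : supNorm (deriv P) * (64 / (π * r)) < supNorm P / 8 := by
    rw [mul_div_assoc', div_lt_div_iff₀ (by positivity) (by norm_num)]
    linarith
  have hfar : 8 * supNorm P / (π * r * (64 / (π * r))) = supNorm P / 8 := by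
    field_simp
    norm_num
  refine (abs_fejer_conv_sub_le hdiff.continuous hPM hPL hr0
    (by positivity : 0 < 64 / (π * r))).trans_lt ?_
  linarith

theorem convolution_with_fejer_close
    (P : ℝ → ℝ) (hbdd : ∃ M : ℝ, ∀ x, |P x| ≤ M)
    (hdiff : Differentiable ℝ P) (hint : Integrable P)
    (hd : BddAbove (Set.range fun x => |deriv P x|))
    (hpos : 0 < supNorm P)
    (r : ℝ) (hr : r > 8 ^ 3 / Real.pi * (supNorm (deriv P) / supNorm P)) :
    ∀ x : ℝ,
      |(1 / Real.sqrt (2 * Real.pi)) * (∫ t : ℝ, P (x - t) * (r * fejer (r * t))) - P x| <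
        supNorm P / 4 :=
  convolution_with_fejer_close_general P hbdd hdiff hd hpos r hr
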